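/- arXiv:2112.11321 — 7 statements merged into one kernel-verified Lean document; each statement's English description precedes it below -/
import Mathlib

section
/- If the set of free states is closed under tensor products (σ₁, σ₂ ∈ F implies σ₁ ⊗ σ₂ ∈ F), then the projective robustness is submultiplicative: Ω_F(ρ ⊗ ω) ≤ Ω_F(ρ)·Ω_F(ω) for all states ρ, ω. -/
open scoped ENNReal ComplexOrder
open Matrix

noncomputable section

variable {ι κ : Type*}

/-- Loewner order: `A ≤ B` iff `B - A` is positive semidefinite. -/
def Loe [Fintype ι] (A B : Matrix ι ι ℂ) : Prop := (B - A).PosSemidef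

/-- The (non-logarithmic) max-relative entropy `Rmax(ρ‖σ) = inf {λ : ρ ≤ λσ}`,
with the convention `inf ∅ = ∞`. -/
noncomputable def Rmax [Fintype ι] (ρ σ : Matrix ι ι ℂ) : ℝ≥0∞ :=
  sInf {x : ℝ≥0∞ | ∃ l : ℝ, 0 ≤ l ∧ x = ENNReal.ofReal l ∧ ((l : ℂ) • σ - ρ).PosSemidef}

/-- A density matrix: positive semidefinite with unit trace. -/
def IsState [Fintype ι] (ρ : Matrix ι ι ℂ) : Prop := ρ.PosSemidef ∧ ρ.trace = 1

/-- The projective robustness `Ω_F(ρ) = inf_{σ∈F} Rmax(ρ‖σ) · Rmax(σ‖ρ)`. -/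
noncomputable def Omega [Fintype ι] (F : Set (Matrix ι ι ℂ)) (ρ : Matrix ι ι ℂ) : ℝ≥0∞ :=
  ⨅ σ ∈ F, Rmax ρ σ * Rmax σ ρ

/-- The cone generated by `F`: `{cσ : c ≥ 0, σ ∈ F}`. -/
def coneF [Fintype ι] (F : Set (Matrix ι ι ℂ)) : Set (Matrix ι ι ℂ) :=
  {X | ∃ c : ℝ, 0 ≤ c ∧ ∃ σ ∈ F, X = (c : ℂ) • σ}

/-- The affine hull of `F` (real affine combinations). -/
def affHull [Fintype ι] (F : Set (Matrix ι ι ℂ)) : Set (Matrix ι ι ℂ) :=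
  {Z | ∃ (k : ℕ) (c : Fin k → ℝ) (σ : Fin k → Matrix ι ι ℂ),
    (∀ i, σ i ∈ F) ∧ (∑ i, c i) = 1 ∧ Z = ∑ i, ((c i : ℂ) • σ i)}

/-- The generalised robustness `R_F(ρ) = inf_{σ∈F} Rmax(ρ‖σ)`. -/
noncomputable def RF [Fintype ι] (F : Set (Matrix ι ι ℂ)) (ρ : Matrix ι ι ℂ) : ℝ≥0∞ :=
  ⨅ σ ∈ F, Rmax ρ σ

/-- The resource weight `W_F(ρ) = (inf_{σ∈F} Rmax(σ‖ρ))⁻¹`. -/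
noncomputable def WF [Fintype ι] (F : Set (Matrix ι ι ℂ)) (ρ : Matrix ι ι ℂ) : ℝ≥0∞ :=
  (⨅ σ ∈ F, Rmax σ ρ)⁻¹

/-! Since `A ≤ λC` and `B ≤ μD` give `A ⊗ B ≤ λμ (C ⊗ D)` for positive semidefinite `A, B`,
`Rmax` is submultiplicative under tensor products. Applied in both directions to a pair of free
states `σ, τ` this bounds `Ω_H(ρ ⊗ ω)` by the product of the values of `σ` and `τ` in the infima
defining `Ω_F(ρ)` and `Ω_G(ω)`. For states all these quantities are at least `1`, so the bound
passes to the infima without `0 · ∞` ambiguities. -/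

open scoped Kronecker

namespace ENNReal

theorem le_biInf_mul_biInf {α β : Type*} {s : Set α} {t : Set β} {f : α → ℝ≥0∞}
    {g : β → ℝ≥0∞} {a : ℝ≥0∞} (hf : ⨅ i ∈ s, f i ≠ 0) (hg : ⨅ j ∈ t, g j ≠ 0)
    (h : ∀ i ∈ s, ∀ j ∈ t, a ≤ f i * g j) : a ≤ (⨅ i ∈ s, f i) * ⨅ j ∈ t, g j := by
  by_cases hfT : ⨅ i ∈ s, f i = ∞
  · simp [hfT, hg]
  by_cases hgT : ⨅ j ∈ t, g j = ∞
  · simp [hgT, hf]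
  simp only [iInf_subtype'] at hfT hgT ⊢
  refine le_iInf_mul_iInf ?_ ?_ fun i j ↦ h i i.2 j j.2
  · simpa only [iInf_eq_top, not_forall] using hfT
  · simpa only [iInf_eq_top, not_forall] using hgT

end ENNReal

section Rmax

variable [Fintype ι] [Fintype κ]

theorem rmax_eq_biInf (A B : Matrix ι ι ℂ) :
    Rmax A B = ⨅ l ∈ {l : ℝ | 0 ≤ l ∧ ((l : ℂ) • B - A).PosSemidef}, ENNReal.ofReal l := by
  rw [Rmax, ← sInf_image]
  congr 1
  ext x
  constructor
  · rintro ⟨l, hl, rfl, hAB⟩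
    exact ⟨l, ⟨hl, hAB⟩, rfl⟩
  · rintro ⟨l, ⟨hl, hAB⟩, rfl⟩
    exact ⟨l, hl, rfl, hAB⟩

theorem one_le_rmax {A B : Matrix ι ι ℂ} (hA : A.trace = 1) (hB : B.trace = 1) :
    1 ≤ Rmax A B := by
  rw [rmax_eq_biInf]
  refine le_iInf₂ fun l ⟨_, hAB⟩ ↦ ENNReal.one_le_ofReal.mpr ?_
  have htrace := hAB.trace_nonneg
  rw [trace_sub, trace_smul, hA, hB, smul_eq_mul, mul_one, sub_nonneg] at htrace
  exact_mod_cast htrace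

theorem rmax_ne_zero {A B : Matrix ι ι ℂ} (hA : A.trace = 1) (hB : B.trace = 1) :
    Rmax A B ≠ 0 :=
  (zero_lt_one.trans_le (one_le_rmax hA hB)).ne'

theorem posSemidef_smul_kronecker_sub {A C : Matrix ι ι ℂ} {B D : Matrix κ κ ℂ} {l m : ℝ}
    (hA : A.PosSemidef) (hB : B.PosSemidef) (hAC : ((l : ℂ) • C - A).PosSemidef)
    (hBD : ((m : ℂ) • D - B).PosSemidef) :
    (((l * m : ℝ) : ℂ) • (C ⊗ₖ D) - A ⊗ₖ B).PosSemidef := by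
  have hD : ((m : ℂ) • D).PosSemidef := by simpa using hBD.add hB
  have hsplit : ((l * m : ℝ) : ℂ) • (C ⊗ₖ D) - A ⊗ₖ B
      = ((l : ℂ) • C - A) ⊗ₖ ((m : ℂ) • D) + A ⊗ₖ ((m : ℂ) • D - B) := by
    ext ⟨i, k⟩ ⟨j, r⟩
    simp only [Matrix.sub_apply, Matrix.add_apply, Matrix.smul_apply, kroneckerMap_apply,
      smul_eq_mul]
    push_cast
    ring
  rw [hsplit]
  exact (hAC.kronecker hD).add (hA.kronecker hBD)

theorem rmax_kronecker_le {A C : Matrix ι ι ℂ} {B D : Matrix κ κ ℂ} (hA : A.PosSemidef)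
    (hB : B.PosSemidef) (hAC : Rmax A C ≠ 0) (hBD : Rmax B D ≠ 0) :
    Rmax (A ⊗ₖ B) (C ⊗ₖ D) ≤ Rmax A C * Rmax B D := by
  rw [rmax_eq_biInf A C] at hAC ⊢
  rw [rmax_eq_biInf B D] at hBD ⊢
  refine ENNReal.le_biInf_mul_biInf hAC hBD fun l ⟨hl, hlAC⟩ m ⟨hm, hmBD⟩ ↦ ?_
  rw [← ENNReal.ofReal_mul hl, rmax_eq_biInf]
  exact iInf₂_le (l * m)
    (Set.mem_ofPred.mpr ⟨mul_nonneg hl hm, posSemidef_smul_kronecker_sub hA hB hlAC hmBD⟩)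

end Rmax

section Omega

variable [Fintype ι] [Fintype κ]

theorem omega_ne_zero {F : Set (Matrix ι ι ℂ)} (hF : ∀ σ ∈ F, IsState σ) {ρ : Matrix ι ι ℂ}
    (hρ : IsState ρ) : Omega F ρ ≠ 0 := by
  refine (zero_lt_one.trans_le (le_iInf₂ fun σ hσ ↦ ?_)).ne'
  exact one_le_mul (one_le_rmax hρ.2 (hF σ hσ).2) (one_le_rmax (hF σ hσ).2 hρ.2)

theorem omega_kronecker_le {H : Set (Matrix (ι × κ) (ι × κ) ℂ)} {ρ σ : Matrix ι ι ℂ}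
    {ω τ : Matrix κ κ ℂ} (hρ : IsState ρ) (hω : IsState ω) (hσ : IsState σ) (hτ : IsState τ)
    (hστ : σ ⊗ₖ τ ∈ H) :
    Omega H (ρ ⊗ₖ ω) ≤ (Rmax ρ σ * Rmax σ ρ) * (Rmax ω τ * Rmax τ ω) := by
  calc Omega H (ρ ⊗ₖ ω) ≤ Rmax (ρ ⊗ₖ ω) (σ ⊗ₖ τ) * Rmax (σ ⊗ₖ τ) (ρ ⊗ₖ ω) := iInf₂_le _ hστ
    _ ≤ (Rmax ρ σ * Rmax ω τ) * (Rmax σ ρ * Rmax τ ω) := by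
      gcongr
      · exact rmax_kronecker_le hρ.1 hω.1 (rmax_ne_zero hρ.2 hσ.2) (rmax_ne_zero hω.2 hτ.2)
      · exact rmax_kronecker_le hσ.1 hτ.1 (rmax_ne_zero hσ.2 hρ.2) (rmax_ne_zero hτ.2 hω.2)
    _ = (Rmax ρ σ * Rmax σ ρ) * (Rmax ω τ * Rmax τ ω) := mul_mul_mul_comm _ _ _ _

end Omega

theorem omega_submultiplicative_general [Fintype ι] [Fintype κ]
    (F : Set (Matrix ι ι ℂ)) (G : Set (Matrix κ κ ℂ)) (H : Set (Matrix (ι × κ) (ι × κ) ℂ))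
    (hFstates : ∀ σ ∈ F, IsState σ) (hGstates : ∀ σ ∈ G, IsState σ)
    (htensor : ∀ σ ∈ F, ∀ τ ∈ G, Matrix.kroneckerMap (· * ·) σ τ ∈ H)
    (ρ : Matrix ι ι ℂ) (ω : Matrix κ κ ℂ) (hρ : IsState ρ) (hω : IsState ω) :
    Omega H (Matrix.kroneckerMap (· * ·) ρ ω) ≤ Omega F ρ * Omega G ω :=
  ENNReal.le_biInf_mul_biInf (omega_ne_zero hFstates hρ) (omega_ne_zero hGstates hω)
    fun σ hσ τ hτ ↦
      omega_kronecker_le hρ hω (hFstates σ hσ) (hGstates τ hτ) (htensor σ hσ τ hτ)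

/-- If tensor products of free states are free, the projective robustness is
submultiplicative: `Ω(ρ ⊗ ω) ≤ Ω(ρ)·Ω(ω)`. -/
theorem omega_submultiplicative [Fintype ι] [DecidableEq ι] [Fintype κ] [DecidableEq κ]
    (F : Set (Matrix ι ι ℂ)) (G : Set (Matrix κ κ ℂ)) (H : Set (Matrix (ι × κ) (ι × κ) ℂ))
    (hF : IsClosed F) (hG : IsClosed G) (hH : IsClosed H)
    (hFstates : ∀ σ ∈ F, IsState σ) (hGstates : ∀ σ ∈ G, IsState σ)
    (hHstates : ∀ σ ∈ H, IsState σ)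
    (htensor : ∀ σ ∈ F, ∀ τ ∈ G, Matrix.kroneckerMap (· * ·) σ τ ∈ H)
    (ρ : Matrix ι ι ℂ) (ω : Matrix κ κ ℂ) (hρ : IsState ρ) (hω : IsState ω) :
    Omega H (Matrix.kroneckerMap (· * ·) ρ ω) ≤ Omega F ρ * Omega G ω :=
  omega_submultiplicative_general F G H hFstates hGstates htensor ρ ω hρ hω
end
end

section
/- When F is convex, the projective robustness is quasiconvex: for any states ρ, ω and t ∈ [0,1], Ω_F(tρ + (1−t)ω) ≤ max{Ω_F(ρ), Ω_F(ω)}. -/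
open scoped ENNReal ComplexOrder
open Matrix

noncomputable section

variable {ι κ : Type*}

/-!
In the Loewner order, `Ω_F(ρ) ≤ M` as soon as `ρ ≤ s • σ ≤ M • ρ` for some `σ ∈ F` and `s > 0`.
Take near-optimal witnesses `ρ ≤ l • σ ≤ l * m • ρ` and `ω ≤ l' • σ' ≤ l' * m' • ω`. By convexity
`t * l • σ + (1 - t) * l' • σ'` is a positive multiple of a point of `F`, and it lies between
`t • ρ + (1 - t) • ω` and `max (l * m) (l' * m')` times that mixture. For states the unit trace
forces `l ≥ 1`, which keeps the products in `ℝ≥0∞` away from `0 * ∞`.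
-/

open scoped MatrixOrder

lemma ENNReal.exists_mul_lt_of_mul_lt {a b c : ℝ≥0∞} (ha : a ≠ 0) (hb : b ≠ 0) (h : a * b < c) :
    ∃ a', a < a' ∧ ∃ b', b < b' ∧ a' * b' < c := by
  have hb_top : b ≠ ∞ := by rintro rfl; simp [ha] at h
  obtain ⟨a', haa', ha'⟩ := exists_between ((ENNReal.lt_div_iff_mul_lt (.inl hb) (.inl hb_top)).2 h)
  have hb_lt : b < c / a' :=
    (ENNReal.lt_div_iff_mul_lt (.inl (pos_of_gt haa').ne') (.inl ha'.ne_top)).2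
      (ENNReal.mul_lt_of_lt_div' ha')
  obtain ⟨b', hbb', hb'⟩ := exists_between hb_lt
  exact ⟨a', haa', b', hbb', ENNReal.mul_lt_of_lt_div' hb'⟩

lemma Convex.exists_smul_eq_smul_add_smul {𝕜 E : Type*} [Field 𝕜] [LinearOrder 𝕜]
    [IsStrictOrderedRing 𝕜] [AddCommGroup E] [Module 𝕜 E] {s : Set E} (hs : Convex 𝕜 s)
    {x y : E} (hx : x ∈ s) (hy : y ∈ s) {a b : 𝕜} (ha : 0 ≤ a) (hb : 0 ≤ b) :
    ∃ z ∈ s, (a + b) • z = a • x + b • y := by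
  rw [← Set.mem_smul_set, hs.add_smul ha hb]
  exact Set.add_mem_add (Set.smul_mem_smul_set hx) (Set.smul_mem_smul_set hy)

lemma smul_le_smul_of_le_smul {𝕜 E : Type*} [Semiring 𝕜] [PartialOrder 𝕜] [AddCommMonoid E]
    [PartialOrder E] [Module 𝕜 E] [PosSMulMono 𝕜 E] [SMulPosMono 𝕜 E] {x y : E} (hx : 0 ≤ x)
    {a b c : 𝕜} (hyx : y ≤ b • x) (ha : 0 ≤ a) (habc : a * b ≤ c) : a • y ≤ c • x :=
  calc a • y ≤ a • b • x := smul_le_smul_of_nonneg_left hyx ha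
    _ = (a * b) • x := (mul_smul a b x).symm
    _ ≤ c • x := smul_le_smul_of_nonneg_right habc hx

section
variable {n : Type*} [Fintype n]

lemma IsState.one_le_of_le_smul {ρ σ : Matrix n n ℂ} (hρ : IsState ρ) (hσ : IsState σ) {l : ℝ}
    (h : ρ ≤ l • σ) : 1 ≤ l := by
  have htr := (Matrix.le_iff.mp h).trace_nonneg
  rw [trace_sub, trace_smul, hρ.2, hσ.2, ← Complex.coe_smul, smul_eq_mul, mul_one,
    sub_nonneg] at htr
  exact_mod_cast htr

lemma Rmax_le_ofReal {ρ σ : Matrix n n ℂ} {l : ℝ} (hl : 0 ≤ l) (h : ρ ≤ l • σ) :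
    Rmax ρ σ ≤ ENNReal.ofReal l :=
  sInf_le ⟨l, hl, rfl, by rwa [Complex.coe_smul]⟩

lemma exists_le_smul_of_Rmax_lt {ρ σ : Matrix n n ℂ} {c : ℝ≥0∞} (h : Rmax ρ σ < c) :
    ∃ l : ℝ, 0 ≤ l ∧ ρ ≤ l • σ ∧ ENNReal.ofReal l < c := by
  obtain ⟨_, ⟨l, hl, rfl, hle⟩, hlt⟩ := sInf_lt_iff.mp h
  exact ⟨l, hl, by rwa [← Complex.coe_smul], hlt⟩

lemma IsState.one_le_Rmax {ρ σ : Matrix n n ℂ} (hρ : IsState ρ) (hσ : IsState σ) :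
    1 ≤ Rmax ρ σ :=
  le_sInf <| by
    rintro _ ⟨l, -, rfl, h⟩
    exact ENNReal.one_le_ofReal.mpr (hρ.one_le_of_le_smul hσ (by rwa [← Complex.coe_smul]))

lemma Omega_le_of_le_smul_le {F : Set (Matrix n n ℂ)} {ρ σ : Matrix n n ℂ} (hσ : σ ∈ F)
    {s M : ℝ} (hs : 0 < s) (hM : 0 ≤ M) (hρσ : ρ ≤ s • σ) (hσρ : s • σ ≤ M • ρ) :
    Omega F ρ ≤ ENNReal.ofReal M := by
  have hσρ' : σ ≤ (M / s) • ρ := by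
    simpa [smul_smul, hs.ne', div_eq_inv_mul] using
      smul_le_smul_of_nonneg_left hσρ (inv_nonneg.2 hs.le)
  calc Omega F ρ ≤ Rmax ρ σ * Rmax σ ρ := iInf₂_le σ hσ
    _ ≤ ENNReal.ofReal s * ENNReal.ofReal (M / s) :=
      mul_le_mul' (Rmax_le_ofReal hs.le hρσ) (Rmax_le_ofReal (by positivity) hσρ')
    _ = ENNReal.ofReal M := by rw [← ENNReal.ofReal_mul hs.le, mul_div_cancel₀ _ hs.ne']

lemma exists_le_smul_le_of_Omega_lt {F : Set (Matrix n n ℂ)} (hF : ∀ σ ∈ F, IsState σ)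
    {ρ : Matrix n n ℂ} (hρ : IsState ρ) {c : ℝ≥0∞} (h : Omega F ρ < c) :
    ∃ σ ∈ F, ∃ l m : ℝ, 0 < l ∧ 0 ≤ m ∧ ρ ≤ l • σ ∧ σ ≤ m • ρ ∧
      ENNReal.ofReal (l * m) < c := by
  obtain ⟨σ, hσF, hlt⟩ : ∃ σ ∈ F, Rmax ρ σ * Rmax σ ρ < c := by
    simpa only [Omega, iInf_lt_iff, exists_prop] using h
  have hσ := hF σ hσF
  obtain ⟨a, ha, b, hb, hab⟩ := ENNReal.exists_mul_lt_of_mul_lt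
    (one_pos.trans_le (hρ.one_le_Rmax hσ)).ne' (one_pos.trans_le (hσ.one_le_Rmax hρ)).ne' hlt
  obtain ⟨l, hl0, hl, hla⟩ := exists_le_smul_of_Rmax_lt ha
  obtain ⟨m, hm0, hm, hmb⟩ := exists_le_smul_of_Rmax_lt hb
  refine ⟨σ, hσF, l, m, one_pos.trans_le (hρ.one_le_of_le_smul hσ hl), hm0, hl, hm, ?_⟩
  rw [ENNReal.ofReal_mul hl0]
  exact (mul_le_mul' hla.le hmb.le).trans_lt hab

lemma Omega_convexCombination_le {F : Set (Matrix n n ℂ)} (hF : Convex ℝ F)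
    {ρ ω σ σ' : Matrix n n ℂ} (hρ : 0 ≤ ρ) (hω : 0 ≤ ω) (hσ : σ ∈ F) (hσ' : σ' ∈ F)
    {l m l' m' : ℝ} (hl : 0 < l) (hm : 0 ≤ m) (hl' : 0 < l')
    (hρσ : ρ ≤ l • σ) (hσρ : σ ≤ m • ρ) (hωσ' : ω ≤ l' • σ') (hσ'ω : σ' ≤ m' • ω)
    {t : ℝ} (ht0 : 0 ≤ t) (ht1 : t ≤ 1) :
    Omega F (t • ρ + (1 - t) • ω) ≤ ENNReal.ofReal (max (l * m) (l' * m')) := by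
  have ht1' : 0 ≤ 1 - t := sub_nonneg.2 ht1
  have hs : 0 < t * l + (1 - t) * l' := by
    rcases ht0.eq_or_lt with rfl | ht
    · simpa using hl'
    · exact add_pos_of_pos_of_nonneg (mul_pos ht hl) (mul_nonneg ht1' hl'.le)
  obtain ⟨τ, hτ, hτ_eq⟩ :=
    hF.exists_smul_eq_smul_add_smul hσ hσ' (mul_nonneg ht0 hl.le) (mul_nonneg ht1' hl'.le)
  refine Omega_le_of_le_smul_le hτ hs ((mul_nonneg hl.le hm).trans (le_max_left _ _)) ?_ ?_
  · rw [hτ_eq, mul_smul, mul_smul]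
    exact add_le_add (smul_le_smul_of_nonneg_left hρσ ht0)
      (smul_le_smul_of_nonneg_left hωσ' ht1')
  · rw [hτ_eq, smul_add, smul_smul, smul_smul]
    exact add_le_add
      (smul_le_smul_of_le_smul hρ hσρ (mul_nonneg ht0 hl.le)
        (by nlinarith [le_max_left (l * m) (l' * m')]))
      (smul_le_smul_of_le_smul hω hσ'ω (mul_nonneg ht1' hl'.le)
        (by nlinarith [le_max_right (l * m) (l' * m')]))

end

theorem omega_quasiconvex_general [Fintype ι]
    (F : Set (Matrix ι ι ℂ)) (hconv : Convex ℝ F)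
    (hFstates : ∀ σ ∈ F, IsState σ)
    (ρ ω : Matrix ι ι ℂ) (hρ : IsState ρ) (hω : IsState ω)
    (t : ℝ) (ht0 : 0 ≤ t) (ht1 : t ≤ 1) :
    Omega F ((t : ℂ) • ρ + ((1 - t : ℝ) : ℂ) • ω) ≤ max (Omega F ρ) (Omega F ω) := by
  refine le_of_forall_gt_imp_ge_of_dense fun c hc => ?_
  obtain ⟨σ, hσ, l, m, hl, hm, hρσ, hσρ, hlm⟩ :=
    exists_le_smul_le_of_Omega_lt hFstates hρ ((le_max_left _ _).trans_lt hc)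
  obtain ⟨σ', hσ', l', m', hl', -, hωσ', hσ'ω, hlm'⟩ :=
    exists_le_smul_le_of_Omega_lt hFstates hω ((le_max_right _ _).trans_lt hc)
  rw [Complex.coe_smul, Complex.coe_smul]
  calc _ ≤ ENNReal.ofReal (max (l * m) (l' * m')) :=
        Omega_convexCombination_le hconv hρ.1.nonneg hω.1.nonneg hσ hσ' hl hm hl'
          hρσ hσρ hωσ' hσ'ω ht0 ht1
    _ ≤ c := by rw [ENNReal.ofReal_max]; exact (max_lt hlm hlm').le

/-- When `F` is convex, the projective robustness is quasiconvex. -/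
theorem omega_quasiconvex [Fintype ι]
    (F : Set (Matrix ι ι ℂ)) (hF : IsClosed F) (hconv : Convex ℝ F)
    (hFstates : ∀ σ ∈ F, IsState σ)
    (ρ ω : Matrix ι ι ℂ) (hρ : IsState ρ) (hω : IsState ω)
    (t : ℝ) (ht0 : 0 ≤ t) (ht1 : t ≤ 1) :
    Omega F ((t : ℂ) • ρ + ((1 - t : ℝ) : ℂ) • ω) ≤ max (Omega F ρ) (Omega F ω) :=
  omega_quasiconvex_general F hconv hFstates ρ ω hρ hω t ht0 ht1
end
end

section
/- The projective robustness is lower semicontinuous: for any sequence of density matrices ρₙ converging to ρ, Ω_F(ρ) ≤ liminf_{n→∞} Ω_F(ρₙ). Equivalently, the sublevel sets {ω : Ω_F(ω) ≤ γ} are closed for every γ ∈ ℝ. -/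
open scoped ENNReal ComplexOrder
open Matrix

noncomputable section

variable {ι κ : Type*}

/-! `Rmax` is jointly lower semicontinuous: its sublevel set `{Rmax ρ σ ≤ c}` is the intersection
over `c' > c` of the projections, along the compact intervals `[0, c']`, of the closed set
`{(ρ, σ, l) | ρ ≤ l σ}`. In `ℝ≥0∞` a product of lower semicontinuous functions is lower
semicontinuous (`liminf` is supermultiplicative there), and an infimum over a compact set of a
jointly lower semicontinuous function is again lower semicontinuous. `F` is compact because
density matrices have entries of modulus at most `1`. -/

open Set

theorem isClosed_setOf_exists_mem_of_isCompact {X Y : Type*} [TopologicalSpace X]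
    [TopologicalSpace Y] {K : Set Y} (hK : IsCompact K) {C : Set (X × Y)} (hC : IsClosed C) :
    IsClosed {x | ∃ y ∈ K, (x, y) ∈ C} := by
  have : CompactSpace K := isCompact_iff_compactSpace.mp hK
  have hC' : IsClosed {p : X × K | (p.1, (p.2 : Y)) ∈ C} :=
    hC.preimage (continuous_fst.prodMk (continuous_subtype_val.comp continuous_snd))
  convert isClosedMap_fst_of_compactSpace _ hC' using 1
  ext x
  simp

theorem lowerSemicontinuous_biInf_of_isCompact {X Y γ : Type*} [TopologicalSpace X]
    [TopologicalSpace Y] [CompleteLinearOrder γ] [DenselyOrdered γ] {f : X × Y → γ}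
    (hf : LowerSemicontinuous f) {K : Set Y} (hK : IsCompact K) :
    LowerSemicontinuous fun x => ⨅ y ∈ K, f (x, y) := by
  refine lowerSemicontinuous_iff_isClosed_preimage.2 fun c => ?_
  have : (fun x => ⨅ y ∈ K, f (x, y)) ⁻¹' Iic c
      = ⋂ c' ∈ Ioi c, {x | ∃ y ∈ K, (x, y) ∈ f ⁻¹' Iic c'} := by
    ext x
    simp only [mem_preimage, mem_Iic, mem_iInter, mem_Ioi, mem_ofPred_eq]
    constructor
    · intro hx c' hc'
      obtain ⟨y, hy, hlt⟩ := by simpa only [iInf_lt_iff] using hx.trans_lt hc'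
      exact ⟨y, hy, hlt.le⟩
    · intro h
      refine le_of_forall_gt_imp_ge_of_dense fun c' hc' => ?_
      obtain ⟨y, hy, hle⟩ := h c' hc'
      exact (biInf_le _ hy).trans hle
  rw [this]
  exact isClosed_biInter fun c' _ =>
    isClosed_setOf_exists_mem_of_isCompact hK (hf.isClosed_preimage c')

theorem ENNReal.lowerSemicontinuous_sInf_ofReal {X : Type*} [TopologicalSpace X]
    {C : Set (X × ℝ)} (hC : IsClosed C) :
    LowerSemicontinuous fun x =>
      sInf {t | ∃ l : ℝ, 0 ≤ l ∧ t = ENNReal.ofReal l ∧ (x, l) ∈ C} := by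
  refine lowerSemicontinuous_iff_isClosed_preimage.2 fun c => ?_
  have : (fun x => sInf {t | ∃ l : ℝ, 0 ≤ l ∧ t = ENNReal.ofReal l ∧ (x, l) ∈ C}) ⁻¹' Iic c
      -- `c' ≠ ⊤` keeps `c'.toReal` from collapsing to `0`
      = ⋂ c' ∈ Ioo c ⊤, {x | ∃ l ∈ Icc 0 c'.toReal, (x, l) ∈ C} := by
    ext x
    simp only [mem_preimage, mem_Iic, mem_iInter, mem_Ioo, mem_ofPred_eq]
    constructor
    · rintro hx c' ⟨hc', hc'top⟩
      obtain ⟨_, ⟨l, hl, rfl, hlC⟩, hlt⟩ := sInf_lt_iff.1 (hx.trans_lt hc')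
      exact ⟨l, ⟨hl, ((ENNReal.ofReal_lt_iff_lt_toReal hl hc'top.ne).1 hlt).le⟩, hlC⟩
    · intro h
      by_contra! hlt
      obtain ⟨c', hc', hc'x⟩ := exists_between hlt
      obtain ⟨l, ⟨hl, hlc'⟩, hlC⟩ := h c' ⟨hc', hc'x.trans_le le_top⟩
      exact (hc'x.trans_le <|
        sInf_le_of_le ⟨l, hl, rfl, hlC⟩ (ENNReal.ofReal_le_of_le_toReal hlc')).false
  rw [this]
  exact isClosed_biInter fun c' _ => isClosed_setOf_exists_mem_of_isCompact isCompact_Icc hC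

theorem LowerSemicontinuous.ennreal_mul {X : Type*} [TopologicalSpace X] {f g : X → ℝ≥0∞}
    (hf : LowerSemicontinuous f) (hg : LowerSemicontinuous g) :
    LowerSemicontinuous fun x => f x * g x := by
  rw [lowerSemicontinuous_iff_le_liminf] at *
  exact fun x => (mul_le_mul' (hf x) (hg x)).trans ENNReal.le_liminf_mul

namespace Matrix

variable {𝕜 : Type*} [RCLike 𝕜]

theorem isClosed_setOf_posSemidef [Fintype ι] : IsClosed {A : Matrix ι ι 𝕜 | A.PosSemidef} := by
  simp only [posSemidef_iff_dotProduct_mulVec, ofPred_and, ofPred_forall]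
  exact (isClosed_eq continuous_id.matrix_conjTranspose continuous_id).inter <|
    isClosed_iInter fun x => isClosed_le continuous_const <|
      continuous_const.dotProduct (continuous_id.matrix_mulVec continuous_const)

theorem PosSemidef.mul_apply_swap_le {A : Matrix ι ι 𝕜} (hA : A.PosSemidef) (i j : ι) :
    A i j * A j i ≤ A i i * A j j := by
  have := (hA.submatrix ![i, j]).det_nonneg
  rw [det_fin_two] at this
  simpa [sub_nonneg] using this

end Matrix

section States

variable [Fintype ι]

theorem IsState.norm_apply_le_one {ρ : Matrix ι ι ℂ} (hρ : IsState ρ) (i j : ι) : ‖ρ i j‖ ≤ 1 := by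
  have hdiag (k : ι) : ρ k k ≤ 1 := by
    rw [← hρ.2]
    exact Finset.single_le_sum (f := fun k => ρ k k) (fun k _ => hρ.1.diag_nonneg)
      (Finset.mem_univ k)
  have hsq : ((‖ρ i j‖ ^ 2 : ℝ) : ℂ) ≤ 1 :=
    calc ((‖ρ i j‖ ^ 2 : ℝ) : ℂ) = ρ i j * ρ j i := by
          rw [← hρ.1.1.apply j i, Complex.star_def, Complex.mul_conj', Complex.ofReal_pow]
      _ ≤ ρ i i * ρ j j := hρ.1.mul_apply_swap_le i j
      _ ≤ 1 := mul_le_one₀ (hdiag i) hρ.1.diag_nonneg (hdiag j)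
  exact (sq_le_one_iff₀ (norm_nonneg _)).1 (by exact_mod_cast hsq)

theorem isCompact_setOf_isState : IsCompact {ρ : Matrix ι ι ℂ | IsState ρ} := by
  have hclosed : IsClosed {ρ : Matrix ι ι ℂ | IsState ρ} :=
    isClosed_setOf_posSemidef.inter (isClosed_eq continuous_id.matrix_trace continuous_const)
  refine (isCompact_univ_pi fun _ => isCompact_univ_pi fun _ =>
    isCompact_closedBall (0 : ℂ) 1).of_isClosed_subset hclosed fun ρ hρ i _ j _ => ?_
  simpa using hρ.norm_apply_le_one i j

end States

theorem lowerSemicontinuous_Rmax [Fintype ι] :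
    LowerSemicontinuous fun p : Matrix ι ι ℂ × Matrix ι ι ℂ => Rmax p.1 p.2 :=
  ENNReal.lowerSemicontinuous_sInf_ofReal <| isClosed_setOf_posSemidef.preimage <|
    ((Complex.continuous_ofReal.comp continuous_snd).smul (continuous_snd.comp continuous_fst)).sub
      (continuous_fst.comp continuous_fst)

theorem lowerSemicontinuous_Omega [Fintype ι] {F : Set (Matrix ι ι ℂ)} (hF : IsCompact F) :
    LowerSemicontinuous (Omega F) :=
  lowerSemicontinuous_biInf_of_isCompact
    (lowerSemicontinuous_Rmax.ennreal_mul (lowerSemicontinuous_Rmax.comp continuous_swap)) hF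

theorem omega_lowerSemicontinuous_general [Fintype ι]
    (F : Set (Matrix ι ι ℂ)) (hF : IsClosed F) (hFstates : ∀ σ ∈ F, IsState σ)
    (ρseq : ℕ → Matrix ι ι ℂ)
    (ρ : Matrix ι ι ℂ)
    (hlim : Filter.Tendsto ρseq Filter.atTop (nhds ρ)) :
    Omega F ρ ≤ Filter.liminf (fun k => Omega F (ρseq k)) Filter.atTop :=
  ((lowerSemicontinuous_Omega (isCompact_setOf_isState.of_isClosed_subset hF hFstates)).le_liminf
    ρ).trans hlim.liminf_le_liminf_comp

/-- Lower semicontinuity of the projective robustness: for any sequence of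
states `ρₙ → ρ`, `Ω_F(ρ) ≤ liminf Ω_F(ρₙ)`. -/
theorem omega_lowerSemicontinuous [Fintype ι]
    (F : Set (Matrix ι ι ℂ)) (hF : IsClosed F) (hFstates : ∀ σ ∈ F, IsState σ)
    (ρseq : ℕ → Matrix ι ι ℂ) (hseq : ∀ k, IsState (ρseq k))
    (ρ : Matrix ι ι ℂ) (hρ : IsState ρ)
    (hlim : Filter.Tendsto ρseq Filter.atTop (nhds ρ)) :
    Omega F ρ ≤ Filter.liminf (fun k => Omega F (ρseq k)) Filter.atTop :=
  omega_lowerSemicontinuous_general F hF hFstates ρseq ρ hlim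
end
end

section
/- The projective robustness is bounded above as Ω_F(ρ) ≤ R_F(ρ)·λ_min(ρ)^{-1} for any full-rank state ρ, where R_F is the generalized robustness and λ_min(ρ) the smallest eigenvalue of ρ. -/
/-!
Let `σ* ∈ F` attain `R_F(ρ)`, so that `Ω_F(ρ) ≤ R_F(ρ) · Rmax(σ*‖ρ)`. Every state `σ` satisfies
`σ ≤ 1`, its eigenvalues being nonnegative with sum `1`, while `λ_min(ρ) · 1 ≤ ρ`; hence
`σ ≤ λ_min(ρ)⁻¹ ρ`, i.e. `Rmax(σ‖ρ) ≤ λ_min(ρ)⁻¹`. Full rank is what makes `λ_min(ρ) > 0`.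
-/

open scoped ENNReal ComplexOrder
open Matrix

noncomputable section

variable {ι κ : Type*}

section Spectrum

open scoped MatrixOrder

variable {𝕜 n : Type*} [RCLike 𝕜] [Fintype n] [DecidableEq n] {A : Matrix n n 𝕜}

theorem Matrix.IsHermitian.posSemidef_sub_smul_one (hA : A.IsHermitian) {c : ℝ}
    (hc : ∀ i, c ≤ hA.eigenvalues i) : (A - (c : 𝕜) • 1).PosSemidef := by
  have hle := (algebraMap_le_iff_le_spectrum (r := c) (a := A) hA.isSelfAdjoint).2 <| by
    rw [hA.spectrum_real_eq_range_eigenvalues]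
    rintro _ ⟨i, rfl⟩
    exact hc i
  rw [Matrix.le_iff, Algebra.algebraMap_eq_smul_one] at hle
  simpa using hle

theorem Matrix.IsHermitian.posSemidef_smul_one_sub (hA : A.IsHermitian) {c : ℝ}
    (hc : ∀ i, hA.eigenvalues i ≤ c) : ((c : 𝕜) • 1 - A).PosSemidef := by
  have hle := (le_algebraMap_iff_spectrum_le (r := c) (a := A) hA.isSelfAdjoint).2 <| by
    rw [hA.spectrum_real_eq_range_eigenvalues]
    rintro _ ⟨i, rfl⟩
    exact hc i
  rw [Matrix.le_iff, Algebra.algebraMap_eq_smul_one] at hle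
  simpa using hle

theorem Matrix.PosDef.iInf_eigenvalues_pos [Nonempty n] (hA : A.PosDef) :
    0 < ⨅ i, hA.1.eigenvalues i := by
  obtain ⟨i, hi⟩ := exists_eq_ciInf_of_finite (f := hA.1.eigenvalues)
  exact hi ▸ hA.eigenvalues_pos i

end Spectrum

section States

variable {ι : Type*} [Fintype ι] [DecidableEq ι]

theorem IsState.eigenvalues_le_one {σ : Matrix ι ι ℂ} (hσ : IsState σ) (i : ι) :
    hσ.1.isHermitian.eigenvalues i ≤ 1 := by
  have hsum : ∑ j, hσ.1.isHermitian.eigenvalues j = 1 := by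
    have htrace : ∑ j, (hσ.1.isHermitian.eigenvalues j : ℂ) = 1 :=
      hσ.1.isHermitian.trace_eq_sum_eigenvalues.symm.trans hσ.2
    exact_mod_cast htrace
  exact hsum ▸ Finset.single_le_sum (fun j _ => hσ.1.eigenvalues_nonneg j) (Finset.mem_univ i)

theorem IsState.posSemidef_one_sub {σ : Matrix ι ι ℂ} (hσ : IsState σ) : (1 - σ).PosSemidef := by
  simpa using hσ.1.isHermitian.posSemidef_smul_one_sub hσ.eigenvalues_le_one

end States

theorem rmax_le_ofReal {ι : Type*} [Fintype ι] {ρ σ : Matrix ι ι ℂ} {l : ℝ} (hl : 0 ≤ l)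
    (h : ((l : ℂ) • σ - ρ).PosSemidef) : Rmax ρ σ ≤ ENNReal.ofReal l :=
  sInf_le ⟨l, hl, rfl, h⟩

theorem rmax_state_le_ofReal_inv {ι : Type*} [Fintype ι] [DecidableEq ι] {σ ρ : Matrix ι ι ℂ}
    (hσ : IsState σ) (hρ : ρ.IsHermitian) {c : ℝ} (hc : 0 < c)
    (hcρ : ∀ i, c ≤ hρ.eigenvalues i) : Rmax σ ρ ≤ ENNReal.ofReal c⁻¹ := by
  refine rmax_le_ofReal (inv_nonneg.mpr hc.le) ?_
  have hsplit : ((c⁻¹ : ℝ) : ℂ) • ρ - σ =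
      ((c⁻¹ : ℝ) : ℂ) • (ρ - (c : ℂ) • 1) + (1 - σ) := by
    rw [smul_sub, smul_smul, ← Complex.ofReal_mul, inv_mul_cancel₀ hc.ne', Complex.ofReal_one,
      one_smul]
    abel
  rw [hsplit]
  exact ((hρ.posSemidef_sub_smul_one hcρ).smul (by exact_mod_cast (inv_nonneg.mpr hc.le))).add
    hσ.posSemidef_one_sub

theorem omega_upper_bound_robustness_eigenvalue_general [Fintype ι] [DecidableEq ι] [Nonempty ι]
    (F : Set (Matrix ι ι ℂ)) (hFstates : ∀ σ ∈ F, IsState σ)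
    (ρ : Matrix ι ι ℂ) (hρ : IsState ρ) (hfull : IsUnit ρ.det)
    (hach : ∃ σ ∈ F, Rmax ρ σ = RF F ρ)
    (lammin : ℝ) (hlam : lammin = ⨅ i, (hρ.1.isHermitian).eigenvalues i) :
    Omega F ρ ≤ RF F ρ * ENNReal.ofReal lammin⁻¹ := by
  obtain ⟨σ, hσF, hσopt⟩ := hach
  have hρpos : ρ.PosDef := hρ.1.posDef_iff_det_ne_zero.mpr hfull.ne_zero
  have hlampos : 0 < lammin := hlam ▸ hρpos.iInf_eigenvalues_pos
  have hlamle : ∀ i, lammin ≤ hρ.1.isHermitian.eigenvalues i := fun i =>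
    hlam ▸ ciInf_le (Set.finite_range _).bddBelow i
  calc Omega F ρ ≤ Rmax ρ σ * Rmax σ ρ := iInf₂_le σ hσF
    _ ≤ RF F ρ * ENNReal.ofReal lammin⁻¹ :=
      mul_le_mul' hσopt.le (rmax_state_le_ofReal_inv (hFstates σ hσF) _ hlampos hlamle)

/-- `Ω_F(ρ) ≤ R_F(ρ)·λ_min(ρ)⁻¹` for a full-rank state `ρ`, assuming the
generalised robustness is achieved by some `σ* ∈ F`. -/
theorem omega_upper_bound_robustness_eigenvalue [Fintype ι] [DecidableEq ι] [Nonempty ι]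
    (F : Set (Matrix ι ι ℂ)) (hF : IsClosed F) (hFstates : ∀ σ ∈ F, IsState σ)
    (ρ : Matrix ι ι ℂ) (hρ : IsState ρ) (hfull : IsUnit ρ.det)
    (hach : ∃ σ ∈ F, Rmax ρ σ = RF F ρ)
    (lammin : ℝ) (hlam : lammin = ⨅ i, (hρ.1.isHermitian).eigenvalues i) :
    Omega F ρ ≤ RF F ρ * ENNReal.ofReal lammin⁻¹ :=
  omega_upper_bound_robustness_eigenvalue_general F hFstates ρ hρ hfull hach lammin hlam
end
end

section
/- Monotonicity of the projective robustness under probabilistic resource-non-generating maps: let E be a positive, trace-non-increasing linear map such that for every σ ∈ F with Tr E(σ) > 0, E(σ)/Tr E(σ) ∈ F. If ρ is a state with Tr E(ρ) > 0, then Ω_F(E(ρ)/Tr E(ρ)) ≤ Ω_F(ρ). -/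
open scoped ENNReal ComplexOrder
open Matrix

noncomputable section

variable {ι κ : Type*}

/-
A positive linear map preserves every operator inequality `A ≤ λB`, so it can only decrease
`Rmax` in both directions, while the normalisation by traces rescales the two factors of
`Rmax(ρ‖σ) · Rmax(σ‖ρ)` by reciprocal amounts. Hence for each free `σ` the normalised image
`σ'` of `σ` witnesses `Ω(ρ') ≤ Rmax(ρ‖σ) · Rmax(σ‖ρ)`. That `σ'` is defined and free needs
`Tr E(σ) > 0`, which follows from `ρ ≤ λσ` and `Tr E(ρ) > 0`; if no such `λ` exists the bound
is `∞ · Rmax(σ‖ρ) = ∞`, using `Rmax(σ‖ρ) ≥ 1` for states.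
-/

lemma Rmax_le_ofReal_s11 [Fintype ι] {A B : Matrix ι ι ℂ} {l : ℝ} (hl : 0 ≤ l)
    (h : ((l : ℂ) • B - A).PosSemidef) : Rmax A B ≤ ENNReal.ofReal l :=
  sInf_le ⟨l, hl, rfl, h⟩

lemma Rmax_map_le [Fintype ι] [Fintype κ] {E : Matrix ι ι ℂ →ₗ[ℂ] Matrix κ κ ℂ}
    (hE : ∀ X, X.PosSemidef → (E X).PosSemidef) (A B : Matrix ι ι ℂ) :
    Rmax (E A) (E B) ≤ Rmax A B :=
  le_sInf fun _ ⟨l, hl, hx, h⟩ => hx ▸ Rmax_le_ofReal_s11 hl (by simpa using hE _ h)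

lemma Rmax_smul_smul_le [Fintype ι] {a b : ℝ} (ha : 0 < a) (hb : 0 < b) (A B : Matrix ι ι ℂ) :
    Rmax ((a : ℂ) • A) ((b : ℂ) • B) ≤ ENNReal.ofReal (a / b) * Rmax A B := by
  have hc0 : ENNReal.ofReal (a / b) ≠ 0 := by simpa using div_pos ha hb
  calc Rmax ((a : ℂ) • A) ((b : ℂ) • B)
      ≤ ⨅ x ∈ {x : ℝ≥0∞ | ∃ l : ℝ, 0 ≤ l ∧ x = ENNReal.ofReal l ∧ ((l : ℂ) • B - A).PosSemidef},
          ENNReal.ofReal (a / b) * x := by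
        refine le_iInf₂ fun _ ⟨l, hl, hx, h⟩ => ?_
        rw [hx, ← ENNReal.ofReal_mul (by positivity)]
        refine Rmax_le_ofReal_s11 (by positivity) ?_
        have : ((a / b * l : ℝ) : ℂ) • ((b : ℂ) • B) - (a : ℂ) • A
            = (a : ℂ) • ((l : ℂ) • B - A) := by
          rw [smul_smul, smul_sub, smul_smul]
          congr 2
          push_cast
          field_simp
        rw [this]
        exact h.smul (by exact_mod_cast ha.le)
    _ = ENNReal.ofReal (a / b) * Rmax A B := by
        simp_rw [Rmax, sInf_eq_iInf, ENNReal.mul_iInf_of_ne hc0 ENNReal.ofReal_ne_top]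

lemma Rmax_mul_Rmax_smul_smul_le [Fintype ι] {a b : ℝ} (ha : 0 < a) (hb : 0 < b)
    (A B : Matrix ι ι ℂ) :
    Rmax ((a : ℂ) • A) ((b : ℂ) • B) * Rmax ((b : ℂ) • B) ((a : ℂ) • A) ≤ Rmax A B * Rmax B A :=
  calc Rmax ((a : ℂ) • A) ((b : ℂ) • B) * Rmax ((b : ℂ) • B) ((a : ℂ) • A)
      ≤ ENNReal.ofReal (a / b) * Rmax A B * (ENNReal.ofReal (b / a) * Rmax B A) :=
        mul_le_mul' (Rmax_smul_smul_le ha hb A B) (Rmax_smul_smul_le hb ha B A)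
    _ = Rmax A B * Rmax B A := by
        rw [mul_mul_mul_comm, ← ENNReal.ofReal_mul (by positivity),
          div_mul_div_cancel₀ hb.ne', div_self ha.ne', ENNReal.ofReal_one, one_mul]

lemma trace_re_pos_of_Rmax_ne_top [Fintype ι] {A B : Matrix ι ι ℂ} (h : Rmax A B ≠ ⊤)
    (hA : 0 < A.trace.re) : 0 < B.trace.re := by
  obtain ⟨_, ⟨l, hl, -, hAB⟩, -⟩ := sInf_lt_iff.mp (lt_top_iff_ne_top.mpr h)
  have := (Complex.nonneg_iff.mp hAB.trace_nonneg).1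
  simp only [trace_sub, trace_smul, smul_eq_mul, Complex.sub_re, Complex.re_ofReal_mul] at this
  nlinarith

lemma one_le_Rmax [Fintype ι] {A B : Matrix ι ι ℂ} (hA : A.trace = 1) (hB : B.trace = 1) :
    1 ≤ Rmax A B := by
  refine le_sInf fun _ ⟨l, _, hx, h⟩ => ?_
  have := (Complex.nonneg_iff.mp h.trace_nonneg).1
  simp only [trace_sub, trace_smul, smul_eq_mul, Complex.sub_re, Complex.re_ofReal_mul, hA, hB,
    Complex.one_re] at this
  rw [hx, ← ENNReal.ofReal_one]
  exact ENNReal.ofReal_le_ofReal (by linarith)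

theorem omega_monotone_probabilistic_general [Fintype ι] [Fintype κ]
    (F : Set (Matrix ι ι ℂ)) (F' : Set (Matrix κ κ ℂ))
    (hFstates : ∀ σ ∈ F, IsState σ)
    (E : Matrix ι ι ℂ →ₗ[ℂ] Matrix κ κ ℂ)
    (hpos : ∀ X : Matrix ι ι ℂ, X.PosSemidef → (E X).PosSemidef)
    (hfree : ∀ σ ∈ F, 0 < ((E σ).trace).re →
      ((((E σ).trace.re)⁻¹ : ℂ) • E σ) ∈ F')
    (ρ : Matrix ι ι ℂ) (hρ : IsState ρ) (hp : 0 < ((E ρ).trace).re) :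
    Omega F' ((((E ρ).trace.re)⁻¹ : ℂ) • E ρ) ≤ Omega F ρ := by
  refine le_iInf₂ fun σ hσ => ?_
  by_cases hfin : Rmax ρ σ = ⊤
  · rw [hfin, ENNReal.top_mul (zero_lt_one.trans_le (one_le_Rmax (hFstates σ hσ).2 hρ.2)).ne']
    exact le_top
  have hs : 0 < (E σ).trace.re :=
    trace_re_pos_of_Rmax_ne_top (ne_top_of_le_ne_top hfin (Rmax_map_le hpos ρ σ)) hp
  have hσ' := hfree σ hσ hs
  rw [← Complex.ofReal_inv] at hσ' ⊢
  calc Omega F' ((((E ρ).trace.re⁻¹ : ℝ) : ℂ) • E ρ)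
      ≤ Rmax ((((E ρ).trace.re⁻¹ : ℝ) : ℂ) • E ρ) ((((E σ).trace.re⁻¹ : ℝ) : ℂ) • E σ) *
          Rmax ((((E σ).trace.re⁻¹ : ℝ) : ℂ) • E σ) ((((E ρ).trace.re⁻¹ : ℝ) : ℂ) • E ρ) :=
        iInf₂_le _ hσ'
    _ ≤ Rmax (E ρ) (E σ) * Rmax (E σ) (E ρ) :=
        Rmax_mul_Rmax_smul_smul_le (inv_pos.mpr hp) (inv_pos.mpr hs) _ _
    _ ≤ Rmax ρ σ * Rmax σ ρ := mul_le_mul' (Rmax_map_le hpos ρ σ) (Rmax_map_le hpos σ ρ)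

/-- Monotonicity of the projective robustness under probabilistic
resource-non-generating maps: if `E` is positive, trace-non-increasing, and maps every free
state (with nonzero output trace) to a free state after normalisation, then
`Ω_{F'}(E(ρ)/Tr E(ρ)) ≤ Ω_F(ρ)`. -/
theorem omega_monotone_probabilistic [Fintype ι] [Fintype κ]
    (F : Set (Matrix ι ι ℂ)) (F' : Set (Matrix κ κ ℂ))
    (hF : IsClosed F) (hF' : IsClosed F')
    (hFstates : ∀ σ ∈ F, IsState σ) (hF'states : ∀ σ ∈ F', IsState σ)
    (E : Matrix ι ι ℂ →ₗ[ℂ] Matrix κ κ ℂ)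
    (hpos : ∀ X : Matrix ι ι ℂ, X.PosSemidef → (E X).PosSemidef)
    (htr : ∀ X : Matrix ι ι ℂ, X.PosSemidef → ((E X).trace).re ≤ (X.trace).re)
    (hfree : ∀ σ ∈ F, 0 < ((E σ).trace).re →
      ((((E σ).trace.re)⁻¹ : ℂ) • E σ) ∈ F')
    (ρ : Matrix ι ι ℂ) (hρ : IsState ρ) (hp : 0 < ((E ρ).trace).re) :
    Omega F' ((((E ρ).trace.re)⁻¹ : ℂ) • E ρ) ≤ Omega F ρ :=
  omega_monotone_probabilistic_general F F' hFstates E hpos hfree ρ hρ hp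
end
end

section
/- Bound on probabilistic distillation error via the projective robustness: let φ be a pure state with F_F(φ) := max_{σ∈F} ⟨φ|σ|φ⟩ < 1, and let τ be a state with ⟨φ|τ|φ⟩ ≥ 1 − ε for ε ∈ (0,1]. Then Ω_F(τ) ≥ (1−ε)(1−F_F(φ)) / (ε·F_F(φ)). -/
open scoped ENNReal ComplexOrder
open Matrix

noncomputable section

variable {ι κ : Type*}

/-! If `τ ≤ lσ` then testing against `ψ` gives `1 - ε ≤ l f`; if `σ ≤ mτ` then testing against
`1 - |ψ⟩⟨ψ|` gives `1 - f ≤ m ε`. Multiplying the two bounds and taking infima over `l`, `m` and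
`σ ∈ F` gives the claim. -/

/-- `tr A - ⟨ψ|A|ψ⟩ = tr (Q A Q)` for the projection `Q = 1 - |ψ⟩⟨ψ|`, and `Q A Q ⪰ 0`. -/
lemma dotProduct_mulVec_le_trace [Fintype ι] {A : Matrix ι ι ℂ} (hA : A.PosSemidef)
    {ψ : ι → ℂ} (hψ : star ψ ⬝ᵥ ψ = 1) : star ψ ⬝ᵥ (A *ᵥ ψ) ≤ A.trace := by
  classical
  set Q : Matrix ι ι ℂ := 1 - vecMulVec ψ (star ψ)
  have hQ_herm : Qᴴ = Q := by simp [Q]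
  have hQ_idem : Q * Q = Q := by
    simp only [Q, sub_mul, mul_sub, one_mul, mul_one, vecMulVec_mul_vecMulVec, hψ, one_smul]
    abel
  have htrace : (Qᴴ * A * Q).trace = A.trace - star ψ ⬝ᵥ (A *ᵥ ψ) := by
    rw [hQ_herm, trace_mul_cycle, hQ_idem, trace_mul_comm, mul_sub, mul_one, trace_sub,
      mul_vecMulVec, trace_vecMulVec, dotProduct_comm]
  have hnonneg := (hA.conjTranspose_mul_mul_same Q).trace_nonneg
  rw [htrace] at hnonneg
  exact sub_nonneg.mp hnonneg

lemma re_dotProduct_smul_sub_mulVec [Fintype ι] (ψ : ι → ℂ) (c : ℝ) (X Y : Matrix ι ι ℂ) :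
    (star ψ ⬝ᵥ (((c : ℂ) • X - Y) *ᵥ ψ)).re
      = c * (star ψ ⬝ᵥ (X *ᵥ ψ)).re - (star ψ ⬝ᵥ (Y *ᵥ ψ)).re := by
  rw [sub_mulVec, dotProduct_sub, smul_mulVec, dotProduct_smul, smul_eq_mul,
    Complex.sub_re, Complex.re_ofReal_mul]

lemma re_dotProduct_mulVec_le_of_posSemidef_smul_sub [Fintype ι] {ρ σ : Matrix ι ι ℂ} {l : ℝ}
    (h : ((l : ℂ) • σ - ρ).PosSemidef) (ψ : ι → ℂ) :
    (star ψ ⬝ᵥ (ρ *ᵥ ψ)).re ≤ l * (star ψ ⬝ᵥ (σ *ᵥ ψ)).re := by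
  have := (Complex.le_def.mp (h.dotProduct_mulVec_nonneg ψ)).1
  rw [Complex.zero_re, re_dotProduct_smul_sub_mulVec] at this
  linarith

lemma one_sub_le_mul_one_sub_of_posSemidef_smul_sub [Fintype ι] {ρ σ : Matrix ι ι ℂ} {m : ℝ}
    (hρ : ρ.trace = 1) (hσ : σ.trace = 1) (h : ((m : ℂ) • ρ - σ).PosSemidef)
    {ψ : ι → ℂ} (hψ : star ψ ⬝ᵥ ψ = 1) :
    1 - (star ψ ⬝ᵥ (σ *ᵥ ψ)).re ≤ m * (1 - (star ψ ⬝ᵥ (ρ *ᵥ ψ)).re) := by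
  have := Complex.re_le_re (dotProduct_mulVec_le_trace h hψ)
  rw [re_dotProduct_smul_sub_mulVec, trace_sub, trace_smul, hρ, hσ, smul_eq_mul, mul_one,
    Complex.sub_re, Complex.ofReal_re, Complex.one_re] at this
  linarith

/-- When `x ≤ 0` the left side is `0` unless `a > 0`, and then no `l` is feasible. -/
lemma ofReal_div_le_Rmax [Fintype ι] {ρ σ : Matrix ι ι ℂ} {a x : ℝ}
    (h : ∀ l : ℝ, 0 ≤ l → ((l : ℂ) • σ - ρ).PosSemidef → a ≤ l * x) :
    ENNReal.ofReal a / ENNReal.ofReal x ≤ Rmax ρ σ := by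
  refine le_sInf ?_
  rintro _ ⟨l, hl, rfl, hpsd⟩
  have hal := h l hl hpsd
  rcases lt_or_ge 0 x with hx | hx
  · rw [← ENNReal.ofReal_div_of_pos hx]
    exact ENNReal.ofReal_le_ofReal ((div_le_iff₀ hx).mpr hal)
  · rw [ENNReal.ofReal_of_nonpos (hal.trans (mul_nonpos_of_nonneg_of_nonpos hl hx)),
      ENNReal.zero_div]
    exact zero_le

theorem omega_distillation_error_bound_general [Fintype ι]
    (F : Set (Matrix ι ι ℂ)) (hFstates : ∀ σ ∈ F, IsState σ)
    (ψ : ι → ℂ) (hψ : star ψ ⬝ᵥ ψ = 1)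
    (f : ℝ) (hf1 : f < 1)
    (hfmax : ∀ σ ∈ F, (star ψ ⬝ᵥ (σ *ᵥ ψ)).re ≤ f)
    (ε : ℝ) (hε0 : 0 < ε)
    (τ : Matrix ι ι ℂ) (hτ : IsState τ)
    (hfid : 1 - ε ≤ (star ψ ⬝ᵥ (τ *ᵥ ψ)).re) :
    ENNReal.ofReal ((1 - ε) * (1 - f)) / ENNReal.ofReal (ε * f) ≤ Omega F τ := by
  refine le_iInf₂ fun σ hσ => ?_
  have hσf := hfmax σ hσ
  have hτσ : ENNReal.ofReal (1 - ε) / ENNReal.ofReal f ≤ Rmax τ σ :=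
    ofReal_div_le_Rmax fun l hl hpsd => by
      linarith [re_dotProduct_mulVec_le_of_posSemidef_smul_sub hpsd ψ,
        mul_le_mul_of_nonneg_left hσf hl]
  have hστ : ENNReal.ofReal (1 - f) / ENNReal.ofReal ε ≤ Rmax σ τ :=
    ofReal_div_le_Rmax fun m hm hpsd => by
      linarith [one_sub_le_mul_one_sub_of_posSemidef_smul_sub hτ.2 (hFstates σ hσ).2 hpsd hψ,
        mul_le_mul_of_nonneg_left (show 1 - (star ψ ⬝ᵥ (τ *ᵥ ψ)).re ≤ ε by linarith) hm]
  calc ENNReal.ofReal ((1 - ε) * (1 - f)) / ENNReal.ofReal (ε * f)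
      = ENNReal.ofReal (1 - ε) / ENNReal.ofReal f *
          (ENNReal.ofReal (1 - f) / ENNReal.ofReal ε) := by
        rw [ENNReal.ofReal_mul' (by linarith), mul_comm ε, ENNReal.ofReal_mul' hε0.le,
          ENNReal.mul_div_mul_comm (.inr ENNReal.ofReal_ne_top) (.inl ENNReal.ofReal_ne_top)]
    _ ≤ Rmax τ σ * Rmax σ τ := mul_le_mul' hτσ hστ

/-- Distillation error bound via the projective robustness: if `φ = |ψ⟩⟨ψ|`
is a pure state with `F_F(φ) = f < 1`, and `τ` is a state with `⟨φ|τ|φ⟩ ≥ 1 - ε`, then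
`Ω_F(τ) ≥ (1-ε)(1-f)/(εf)` (with the convention `a/0 = ∞` for `a ≠ 0`). -/
theorem omega_distillation_error_bound [Fintype ι]
    (F : Set (Matrix ι ι ℂ)) (hF : IsClosed F) (hFstates : ∀ σ ∈ F, IsState σ)
    (ψ : ι → ℂ) (hψ : star ψ ⬝ᵥ ψ = 1)
    (f : ℝ) (hf0 : 0 ≤ f) (hf1 : f < 1)
    (hfmax : ∀ σ ∈ F, (star ψ ⬝ᵥ (σ *ᵥ ψ)).re ≤ f)
    (ε : ℝ) (hε0 : 0 < ε) (hε1 : ε ≤ 1)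
    (τ : Matrix ι ι ℂ) (hτ : IsState τ)
    (hfid : 1 - ε ≤ (star ψ ⬝ᵥ (τ *ᵥ ψ)).re) :
    ENNReal.ofReal ((1 - ε) * (1 - f)) / ENNReal.ofReal (ε * f) ≤ Omega F τ :=
  omega_distillation_error_bound_general F hFstates ψ hψ f hf1 hfmax ε hε0 τ hτ hfid
end
end

section
/- Existence of a free probabilistic map from dual witnesses: suppose A, B are positive semidefinite operators with ⟨B,ρ⟩ = 1, ⟨A,ρ⟩ = λμ, and ⟨A,π⟩ ≤ ⟨B,π⟩ for all π ∈ F, and suppose σ' ∈ F, ρ'' a state satisfy ρ'' ≤ λσ' and σ' ≤ μρ''. Then the map E(X) := ⟨B,X⟩(λσ' − ρ'') + ⟨A,X⟩(ρ'' − (1/μ)σ') is completely positive, maps every π ∈ F into cone(F) whenever λσ' − ρ'' ∈ cone(F), and satisfies E(ρ) = (λμ − 1)ρ''. -/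
/-!
`E` is a sum of two maps `X ↦ ⟨K, X⟩ M` with `K, M` positive semidefinite, so its Choi matrix
`B ⊗ (λσ' - ρ'') + A ⊗ (ρ'' - μ⁻¹σ')` is a sum of Kronecker products of PSD matrices.
For `π ∈ F` regroup
`E π = (⟨B, π⟩ - ⟨A, π⟩) (λσ' - ρ'') + ⟨A, π⟩ (λ - μ⁻¹) σ'`:
both coefficients are nonnegative, the second because taking the trace of
`μ (λσ' - ρ'') + (μρ'' - σ') = (λμ - 1) σ'` gives `λμ ≥ 1`, and `cone(F')` of a convex set
is closed under nonnegative combinations. `E ρ = (λμ - 1) ρ''` is a direct computation.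
-/

open scoped ENNReal ComplexOrder
open Matrix

noncomputable section

variable {ι κ : Type*}

section Cone

variable [Fintype ι] {F : Set (Matrix ι ι ℂ)}

lemma subset_coneF : F ⊆ coneF F :=
  fun σ hσ => ⟨1, zero_le_one, σ, hσ, by simp⟩

lemma smul_mem_coneF {z : ℂ} (hz : 0 ≤ z) {X : Matrix ι ι ℂ} (hX : X ∈ coneF F) :
    z • X ∈ coneF F := by
  obtain ⟨c, hc, σ, hσ, rfl⟩ := hX
  rw [Complex.eq_re_of_ofReal_le (r := 0) (z := z) (by simpa using hz)]
  exact ⟨z.re * c, mul_nonneg (Complex.nonneg_iff.mp hz).1 hc, σ, hσ,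
    by rw [smul_smul, Complex.ofReal_mul]⟩

lemma add_mem_coneF (hF : Convex ℝ F) {X Y : Matrix ι ι ℂ} (hX : X ∈ coneF F)
    (hY : Y ∈ coneF F) : X + Y ∈ coneF F := by
  obtain ⟨c, hc, σ, hσ, rfl⟩ := hX
  obtain ⟨d, hd, τ, hτ, rfl⟩ := hY
  rcases (add_nonneg hc hd).eq_or_lt with hcd | hcd
  · obtain ⟨rfl, rfl⟩ : c = 0 ∧ d = 0 := ⟨by linarith, by linarith⟩
    exact ⟨0, le_rfl, σ, hσ, by simp⟩
  refine ⟨c + d, hcd.le, (c / (c + d)) • σ + (d / (c + d)) • τ,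
    hF hσ hτ (by positivity) (by positivity) (by field_simp), ?_⟩
  simp only [Complex.coe_smul, smul_add, smul_smul, mul_div_cancel₀ _ hcd.ne']

end Cone

section Loewner

variable [Fintype κ] {ρ σ : Matrix κ κ ℂ} {lam mu : ℝ}

lemma Loe.inv_smul_left (hmu : 0 < mu) (h : Loe σ ((mu : ℂ) • ρ)) :
    Loe (((mu⁻¹ : ℝ) : ℂ) • σ) ρ := by
  have hscaled := h.smul (Complex.zero_le_real.mpr (inv_nonneg.mpr hmu.le))
  rwa [smul_sub, smul_smul, ← Complex.ofReal_mul, inv_mul_cancel₀ hmu.ne',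
    Complex.ofReal_one, one_smul] at hscaled

lemma one_le_mul_of_loe (hmu : 0 ≤ mu) (hσ : σ.trace = 1) (h1 : Loe ρ ((lam : ℂ) • σ))
    (h2 : Loe σ ((mu : ℂ) • ρ)) : 1 ≤ lam * mu := by
  have hsum : (((lam * mu - 1 : ℝ) : ℂ) • σ).PosSemidef := by
    convert (h1.smul (Complex.zero_le_real.mpr hmu)).add h2 using 1
    push_cast
    module
  have htr := hsum.trace_nonneg
  rw [trace_smul, hσ, smul_eq_mul, mul_one, Complex.zero_le_real] at htr
  linarith

end Loewner

lemma Matrix.PosSemidef.trace_mul_nonneg [Fintype ι] {A P : Matrix ι ι ℂ} (hA : A.PosSemidef)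
    (hP : P.PosSemidef) : 0 ≤ (A * P).trace := by
  classical
  open scoped MatrixOrder in
  obtain ⟨C, rfl⟩ := CStarAlgebra.nonneg_iff_eq_star_mul_self.mp hA.nonneg
  rw [star_eq_conjTranspose, trace_mul_cycle, trace_mul_cycle]
  exact (hP.mul_mul_conjTranspose_same C).trace_nonneg

theorem free_map_from_dual_witnesses_general [Fintype ι] [Fintype κ]
    (F : Set (Matrix ι ι ℂ)) (F' : Set (Matrix κ κ ℂ))
    (hconv' : Convex ℝ F')
    (hFstates : ∀ π ∈ F, IsState π) (hF'states : ∀ σ ∈ F', IsState σ)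
    (A B : Matrix ι ι ℂ) (hA : A.PosSemidef) (hB : B.PosSemidef)
    (ρ : Matrix ι ι ℂ)
    (lam mu : ℝ) (hmu : 0 < mu)
    (hBρ : (B * ρ).trace = 1) (hAρ : (A * ρ).trace = ((lam * mu : ℝ) : ℂ))
    (hAB : ∀ π ∈ F, ((A * π).trace).re ≤ ((B * π).trace).re)
    (σ' : Matrix κ κ ℂ) (hσ' : σ' ∈ F') (ρ'' : Matrix κ κ ℂ)
    (h1 : Loe ρ'' ((lam : ℂ) • σ')) (h2 : Loe σ' ((mu : ℂ) • ρ''))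
    (E : Matrix ι ι ℂ → Matrix κ κ ℂ)
    (hEdef : E = fun X => ((B * X).trace) • ((lam : ℂ) • σ' - ρ'') +
      ((A * X).trace) • (ρ'' - ((mu⁻¹ : ℝ) : ℂ) • σ')) :
    (Matrix.kroneckerMap (· * ·) B ((lam : ℂ) • σ' - ρ'') +
        Matrix.kroneckerMap (· * ·) A (ρ'' - ((mu⁻¹ : ℝ) : ℂ) • σ')).PosSemidef ∧
      (((lam : ℂ) • σ' - ρ'') ∈ coneF F' → ∀ π ∈ F, E π ∈ coneF F') ∧
      E ρ = ((lam * mu - 1 : ℝ) : ℂ) • ρ'' := by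
  subst hEdef
  have hgap : (0 : ℂ) ≤ ((lam - mu⁻¹ : ℝ) : ℂ) := by
    rw [Complex.zero_le_real, sub_nonneg, inv_le_iff_one_le_mul₀ hmu]
    exact one_le_mul_of_loe hmu.le (hF'states σ' hσ').2 h1 h2
  refine ⟨(hB.kronecker h1).add (hA.kronecker (h2.inv_smul_left hmu)), fun hcone π hπ => ?_, ?_⟩
  · dsimp only
    set a := (A * π).trace
    set b := (B * π).trace
    have ha : 0 ≤ a := hA.trace_mul_nonneg (hFstates π hπ).1
    have hb : 0 ≤ b := hB.trace_mul_nonneg (hFstates π hπ).1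
    have hab : a ≤ b := Complex.le_def.mpr
      ⟨hAB π hπ, by rw [← (Complex.nonneg_iff.mp ha).2, ← (Complex.nonneg_iff.mp hb).2]⟩
    have hregroup : b • ((lam : ℂ) • σ' - ρ'') + a • (ρ'' - ((mu⁻¹ : ℝ) : ℂ) • σ') =
        (b - a) • ((lam : ℂ) • σ' - ρ'') + (a * ((lam - mu⁻¹ : ℝ) : ℂ)) • σ' := by
      push_cast
      module
    rw [hregroup]
    exact add_mem_coneF hconv' (smul_mem_coneF (sub_nonneg.mpr hab) hcone)
      (smul_mem_coneF (mul_nonneg ha hgap) (subset_coneF hσ'))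
  · dsimp only
    rw [hBρ, hAρ]
    have hmu' : (mu : ℂ) ≠ 0 := Complex.ofReal_ne_zero.mpr hmu.ne'
    match_scalars <;> field_simp <;> ring

/-- Existence of a free probabilistic map from dual witnesses: given PSD
`A, B` with `⟨B,ρ⟩ = 1`, `⟨A,ρ⟩ = λμ`, `⟨A,π⟩ ≤ ⟨B,π⟩` for all `π ∈ F`, and `σ' ∈ F'`,
a state `ρ''` with `ρ'' ≤ λσ'` and `σ' ≤ μρ''`, the map
`E(X) = ⟨B,X⟩(λσ' - ρ'') + ⟨A,X⟩(ρ'' - μ⁻¹σ')` is completely positive (its Choi operator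
`B ⊗ (λσ'-ρ'') + A ⊗ (ρ''-μ⁻¹σ')` is PSD), maps every `π ∈ F` into `cone(F')` whenever
`λσ' - ρ'' ∈ cone(F')`, and satisfies `E(ρ) = (λμ - 1)ρ''`. -/
theorem free_map_from_dual_witnesses [Fintype ι] [DecidableEq ι] [Fintype κ] [DecidableEq κ]
    (F : Set (Matrix ι ι ℂ)) (F' : Set (Matrix κ κ ℂ))
    (hF : IsClosed F) (hF' : IsClosed F') (hconv' : Convex ℝ F')
    (hFstates : ∀ π ∈ F, IsState π) (hF'states : ∀ σ ∈ F', IsState σ)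
    (A B : Matrix ι ι ℂ) (hA : A.PosSemidef) (hB : B.PosSemidef)
    (ρ : Matrix ι ι ℂ) (hρ : IsState ρ)
    (lam mu : ℝ) (hlam : 0 < lam) (hmu : 0 < mu)
    (hBρ : (B * ρ).trace = 1) (hAρ : (A * ρ).trace = ((lam * mu : ℝ) : ℂ))
    (hAB : ∀ π ∈ F, ((A * π).trace).re ≤ ((B * π).trace).re)
    (σ' : Matrix κ κ ℂ) (hσ' : σ' ∈ F') (ρ'' : Matrix κ κ ℂ) (hρ'' : IsState ρ'')
    (h1 : Loe ρ'' ((lam : ℂ) • σ')) (h2 : Loe σ' ((mu : ℂ) • ρ''))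
    (E : Matrix ι ι ℂ → Matrix κ κ ℂ)
    (hEdef : E = fun X => ((B * X).trace) • ((lam : ℂ) • σ' - ρ'') +
      ((A * X).trace) • (ρ'' - ((mu⁻¹ : ℝ) : ℂ) • σ')) :
    (Matrix.kroneckerMap (· * ·) B ((lam : ℂ) • σ' - ρ'') +
        Matrix.kroneckerMap (· * ·) A (ρ'' - ((mu⁻¹ : ℝ) : ℂ) • σ')).PosSemidef ∧
      (((lam : ℂ) • σ' - ρ'') ∈ coneF F' → ∀ π ∈ F, E π ∈ coneF F') ∧
      E ρ = ((lam * mu - 1 : ℝ) : ℂ) • ρ'' :=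
  free_map_from_dual_witnesses_general F F' hconv' hFstates hF'states A B hA hB ρ lam mu hmu hBρ hAρ
    hAB σ' hσ' ρ'' h1 h2 E hEdef
end
end
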